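/- Let G be a complex Banach–Lie group such that holomorphic functions separate the points of G. Let f₊, g₊ : 𝔻̄ → G be continuous maps that are holomorphic on 𝔻, and let f₋, g₋ : {z ∈ ℂ : |z| ≥ 1} → G be continuous maps that are holomorphic on {z : |z| > 1} and possess limits f₋(∞) and g₋(∞) as |z| → ∞. If f₊(z)f₋(z) = g₊(z)g₋(z) for all z ∈ 𝕊 and f₋(∞) = g₋(∞), then f₊ = g₊ on 𝔻̄ and f₋ = g₋ on {z : |z| ≥ 1}. -/

import Mathlib

/-!
Put `h = gp⁻¹ * fp` on the closed disc and `k = gm * fm⁻¹` outside it, so that `h = k` on the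
circle and `k → 1` at infinity. For a holomorphic `φ : G → ℂ`, Cauchy's formula for `φ ∘ h` on the
unit circle, together with pushing the contour for `φ ∘ k` out to infinity, shows that both
`φ ∘ h` and `φ ∘ k` are constant, equal to `φ 1`. As such `φ` separate points, `h = 1` and `k = 1`.
-/

open Manifold Metric Filter Complex Set Real Topology

section CircleIntegral

variable {E : Type*} [NormedAddCommGroup E] [NormedSpace ℂ E]

theorem tendsto_circleIntegral_sub_inv_smul_atTop [CompleteSpace E] {v : ℂ → E} {c : E} {r : ℝ}
    (w : ℂ) (hvc : ContinuousOn v {z | r ≤ ‖z‖}) (hv : Tendsto v (comap (‖·‖) atTop) (𝓝 c)) :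
    Tendsto (fun R : ℝ => ∮ z in C(0, R), (z - w)⁻¹ • v z) atTop (𝓝 ((2 * π * I : ℂ) • c)) := by
  rw [Metric.tendsto_atTop]
  intro ε hε
  obtain ⟨M, -, hM⟩ := ((atTop_basis.comap (‖·‖)).tendsto_iff nhds_basis_ball).1 hv
    (ε / (8 * π)) (by positivity)
  refine ⟨max (max M r) (2 * ‖w‖ + 1), fun R hR => ?_⟩
  simp only [ge_iff_le, max_le_iff] at hR
  obtain ⟨⟨hMR, hrR⟩, hwR⟩ := hR
  have hR0 : 0 < R := by linarith [norm_nonneg w]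
  have hgap : 0 < R - ‖w‖ := by linarith [norm_nonneg w]
  have hsphere : ∀ z ∈ sphere (0 : ℂ) R, ‖z‖ = R := fun z hz => mem_sphere_zero_iff_norm.1 hz
  have hinv : ContinuousOn (fun z : ℂ => (z - w)⁻¹) (sphere 0 R) :=
    (continuousOn_id.sub continuousOn_const).inv₀ fun z hz => sub_ne_zero.2 fun h => by
      have hzw : z = w := h
      subst hzw
      linarith [hsphere z hz]
  have hvR : ContinuousOn v (sphere 0 R) :=
    hvc.mono fun z hz => show r ≤ ‖z‖ by rw [hsphere z hz]; exact hrR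
  have hconst : (∮ z in C(0, R), (z - w)⁻¹ • c) = (2 * π * I : ℂ) • c := by
    rw [circleIntegral.integral_smul_const, circleIntegral.integral_sub_inv_of_mem_ball
      (by rw [mem_ball_zero_iff]; linarith)]
  calc dist (∮ z in C(0, R), (z - w)⁻¹ • v z) ((2 * π * I : ℂ) • c)
      = ‖∮ z in C(0, R), (z - w)⁻¹ • (v z - c)‖ := by
        simp only [smul_sub]
        rw [dist_eq_norm, ← hconst, ← circleIntegral.integral_sub (f := fun z => (z - w)⁻¹ • v z)
          (g := fun z => (z - w)⁻¹ • c)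
          ((hinv.smul hvR).circleIntegrable hR0.le)
          ((hinv.smul continuousOn_const).circleIntegrable hR0.le)]
    _ ≤ 2 * π * R * ((R - ‖w‖)⁻¹ * (ε / (8 * π))) := by
        refine circleIntegral.norm_integral_le_of_norm_le_const hR0.le fun z hz => ?_
        rw [norm_smul, norm_inv]
        gcongr
        · simpa [hsphere z hz] using norm_sub_norm_le z w
        · exact (mem_ball_iff_norm.1 (hM z (by simp [hsphere z hz, hMR]))).le
    _ = R / (R - ‖w‖) * (ε / 4) := by field_simp; ring
    _ ≤ 2 * (ε / 4) := by gcongr; rw [div_le_iff₀ hgap]; linarith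
    _ < ε := by linarith

theorem circleIntegral_eq_of_tendsto_of_differentiableOn_exterior {f : ℂ → E} {r : ℝ} {L : E}
    (hr : 0 < r) (hc : ContinuousOn f {z | r ≤ ‖z‖}) (hd : DifferentiableOn ℂ f {z | r < ‖z‖})
    (hL : Tendsto (fun R : ℝ => ∮ z in C(0, R), f z) atTop (𝓝 L)) :
    (∮ z in C(0, r), f z) = L := by
  refine tendsto_nhds_unique (tendsto_const_nhds.congr' ?_) hL
  filter_upwards [eventually_ge_atTop r] with R hR
  refine (circleIntegral_eq_of_differentiable_on_annulus_off_countable hr hR countable_empty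
    (hc.mono fun z hz => ?_) fun z hz => hd.differentiableAt (isOpen_lt continuous_const
      continuous_norm |>.mem_nhds ?_)).symm
  · simpa using hz.2
  · simpa using hz.1.2

theorem circleIntegral_dslope [CompleteSpace E] {v : ℂ → E} {w : ℂ} {R : ℝ} (hR : 0 ≤ R)
    (hw : w ∉ sphere 0 R) (hv : ContinuousOn v (sphere 0 R)) :
    (∮ z in C(0, R), dslope v w z) =
      (∮ z in C(0, R), (z - w)⁻¹ • v z) - (∮ z in C(0, R), (z - w)⁻¹) • v w := by
  have hne : ∀ z ∈ sphere (0 : ℂ) R, z ≠ w := fun z hz h => hw (h ▸ hz)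
  have hinv : ContinuousOn (fun z : ℂ => (z - w)⁻¹) (sphere 0 R) :=
    (continuousOn_id.sub continuousOn_const).inv₀ fun z hz => sub_ne_zero.2 (hne z hz)
  rw [circleIntegral.integral_congr hR fun z hz => by
      rw [dslope_of_ne v (hne z hz), slope_def_module, smul_sub],
    circleIntegral.integral_sub (f := fun z => (z - w)⁻¹ • v z) (g := fun z => (z - w)⁻¹ • v w)
      ((hinv.smul hv).circleIntegrable hR) ((hinv.smul continuousOn_const).circleIntegrable hR),
    circleIntegral.integral_smul_const]

variable [CompleteSpace E] {v : ℂ → E} {c : E} {r : ℝ} {w : ℂ}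

theorem circleIntegral_sub_inv_smul_of_exterior_of_mem_ball (hr : 0 < r)
    (hvc : ContinuousOn v {z | r ≤ ‖z‖}) (hvd : DifferentiableOn ℂ v {z | r < ‖z‖})
    (hv : Tendsto v (comap (‖·‖) atTop) (𝓝 c)) (hw : w ∈ ball 0 r) :
    (∮ z in C(0, r), (z - w)⁻¹ • v z) = (2 * π * I : ℂ) • c := by
  rw [mem_ball_zero_iff] at hw
  have hne : ∀ z : ℂ, r ≤ ‖z‖ → z - w ≠ 0 := fun z hz h => by
    rw [sub_eq_zero] at h; subst h; linarith
  refine circleIntegral_eq_of_tendsto_of_differentiableOn_exterior hr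
    (((continuousOn_id.sub continuousOn_const).inv₀ fun z hz => hne z hz).smul hvc)
    (((differentiableOn_id.sub_const w).inv fun z hz => hne z (le_of_lt hz)).smul hvd)
    (tendsto_circleIntegral_sub_inv_smul_atTop w hvc hv)

theorem diffContOnCl_sub_inv_ball (hw : r < ‖w‖) :
    DiffContOnCl ℂ (fun z => (z - w)⁻¹) (ball 0 r) := by
  refine DifferentiableOn.diffContOnCl_ball (U := closedBall 0 r) ?_ subset_rfl
  refine (differentiableOn_id.sub_const w).inv fun z hz h => ?_
  rw [sub_eq_zero] at h
  rw [mem_closedBall_zero_iff] at hz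
  exact hw.not_ge (h ▸ hz)

theorem circleIntegral_sub_inv_smul_of_exterior_of_lt_norm (hr : 0 < r)
    (hvc : ContinuousOn v {z | r ≤ ‖z‖}) (hvd : DifferentiableOn ℂ v {z | r < ‖z‖})
    (hv : Tendsto v (comap (‖·‖) atTop) (𝓝 c)) (hw : r < ‖w‖) :
    (∮ z in C(0, r), (z - w)⁻¹ • v z) = (2 * π * I : ℂ) • c - (2 * π * I : ℂ) • v w := by
  have hopen : {z : ℂ | r < ‖z‖} ∈ 𝓝 w := (isOpen_lt continuous_const continuous_norm).mem_nhds hw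
  have hclosed : {z : ℂ | r ≤ ‖z‖} ∈ 𝓝 w := mem_of_superset hopen fun _ hz => le_of_lt (α := ℝ) hz
  have hvw : DifferentiableAt ℂ v w := hvd.differentiableAt hopen
  have hsphere : ∀ {R}, ‖w‖ ≠ R → w ∉ sphere (0 : ℂ) R :=
    fun h hw => h (mem_sphere_zero_iff_norm.1 hw)
  have hvR : ∀ {R}, r ≤ R → ContinuousOn v (sphere 0 R) := fun hR =>
    hvc.mono fun z hz => show r ≤ ‖z‖ by rw [mem_sphere_zero_iff_norm.1 hz]; exact hR
  have hzero : (∮ z in C(0, r), (z - w)⁻¹) = 0 :=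
    (diffContOnCl_sub_inv_ball hw).circleIntegral_eq_zero hr.le
  have hlim : Tendsto (fun R : ℝ => ∮ z in C(0, R), dslope v w z) atTop
      (𝓝 ((2 * π * I : ℂ) • c - (2 * π * I : ℂ) • v w)) := by
    refine ((tendsto_circleIntegral_sub_inv_smul_atTop w hvc hv).sub_const _).congr' ?_
    filter_upwards [eventually_gt_atTop ‖w‖] with R hR
    have hR0 : 0 ≤ R := (norm_nonneg w).trans hR.le
    rw [circleIntegral_dslope hR0 (hsphere hR.ne) (hvR (hw.le.trans hR.le)),
      circleIntegral.integral_sub_inv_of_mem_ball (mem_ball_zero_iff.2 hR)]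
  -- The difference quotient `dslope v w` is holomorphic on the whole exterior, `w` included.
  rw [← circleIntegral_eq_of_tendsto_of_differentiableOn_exterior hr
    ((continuousOn_dslope hclosed).2 ⟨hvc, hvw⟩)
    ((differentiableOn_dslope hopen).2 hvd) hlim,
    circleIntegral_dslope hr.le (hsphere hw.ne') (hvR le_rfl), hzero, zero_smul, sub_zero]

theorem eqOn_const_of_eqOn_sphere {u : ℂ → E} (hr : 0 < r) (hu : DiffContOnCl ℂ u (ball 0 r))
    (hvc : ContinuousOn v {z | r ≤ ‖z‖}) (hvd : DifferentiableOn ℂ v {z | r < ‖z‖})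
    (hv : Tendsto v (comap (‖·‖) atTop) (𝓝 c)) (huv : EqOn u v (sphere 0 r)) :
    EqOn u (fun _ => c) (closedBall 0 r) ∧ EqOn v (fun _ => c) {z | r ≤ ‖z‖} := by
  have hcauchy : ∀ w, (∮ z in C(0, r), (z - w)⁻¹ • u z) = ∮ z in C(0, r), (z - w)⁻¹ • v z :=
    fun w => circleIntegral.integral_congr hr.le fun z hz => by simp only [huv hz]
  have hball : EqOn u (fun _ => c) (ball 0 r) := fun w hw =>
    smul_right_injective E two_pi_I_ne_zero <| show (2 * π * I : ℂ) • u w = _ by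
      rw [← hu.circleIntegral_sub_inv_smul hw, hcauchy,
        circleIntegral_sub_inv_smul_of_exterior_of_mem_ball hr hvc hvd hv hw]
  have hdisk : EqOn u (fun _ => c) (closedBall 0 r) :=
    hball.of_subset_closure (closure_ball (0 : ℂ) hr.ne' ▸ hu.continuousOn) continuousOn_const
      ball_subset_closedBall (closure_ball (0 : ℂ) hr.ne').ge
  refine ⟨hdisk, fun w (hw : r ≤ ‖w‖) => ?_⟩
  rcases hw.eq_or_lt with hw | hw
  · rw [← huv (mem_sphere_zero_iff_norm.2 hw.symm)]
    exact hdisk (mem_closedBall_zero_iff.2 hw.ge)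
  · have hgoursat : (∮ z in C(0, r), (z - w)⁻¹ • u z) = 0 :=
      ((diffContOnCl_sub_inv_ball hw).smul hu).circleIntegral_eq_zero hr.le
    rw [hcauchy, circleIntegral_sub_inv_smul_of_exterior_of_lt_norm hr hvc hvd hv hw,
      sub_eq_zero] at hgoursat
    exact smul_right_injective E two_pi_I_ne_zero hgoursat.symm

end CircleIntegral

section LieGroup

variable {𝕜 : Type*} [NontriviallyNormedField 𝕜]
  {E : Type*} [NormedAddCommGroup E] [NormedSpace 𝕜 E] {H : Type*} [TopologicalSpace H]
  {I : ModelWithCorners 𝕜 E H} {n : WithTop ℕ∞}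
  {G : Type*} [TopologicalSpace G] [ChartedSpace H G] [Group G]
  {E' : Type*} [NormedAddCommGroup E'] [NormedSpace 𝕜 E'] {H' : Type*} [TopologicalSpace H']
  {I' : ModelWithCorners 𝕜 E' H'} {M : Type*} [TopologicalSpace M] [ChartedSpace H' M]
  {f g : M → G} {s : Set M}

theorem MDifferentiableOn.mul_of_contMDiffMul [ContMDiffMul I n G] (hn : n ≠ 0)
    (hf : MDifferentiableOn I' I f s) (hg : MDifferentiableOn I' I g s) :
    MDifferentiableOn I' I (fun x => f x * g x) s :=
  ((contMDiff_mul I n).mdifferentiable hn).comp_mdifferentiableOn (hf.prodMk hg)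

theorem MDifferentiableOn.inv_of_lieGroup [LieGroup I n G] (hn : n ≠ 0)
    (hf : MDifferentiableOn I' I f s) : MDifferentiableOn I' I (fun x => (f x)⁻¹) s :=
  ((contMDiff_inv I n).mdifferentiable hn).comp_mdifferentiableOn hf

end LieGroup

theorem stmt_1_general
    {E : Type*} [NormedAddCommGroup E] [NormedSpace ℂ E]
    {G : Type*} [TopologicalSpace G] [ChartedSpace E G] [Group G]
    [LieGroup 𝓘(ℂ, E) (⊤ : ℕ∞) G]
    (hsep : ∀ x y : G, x ≠ y → ∃ φ : G → ℂ,
      MDifferentiable 𝓘(ℂ, E) 𝓘(ℂ, ℂ) φ ∧ φ x ≠ φ y)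
    (fp gp fm gm : ℂ → G) (Linf : G)
    (hfpc : ContinuousOn fp (closedBall 0 1))
    (hfpd : MDifferentiableOn 𝓘(ℂ, ℂ) 𝓘(ℂ, E) fp (ball 0 1))
    (hgpc : ContinuousOn gp (closedBall 0 1))
    (hgpd : MDifferentiableOn 𝓘(ℂ, ℂ) 𝓘(ℂ, E) gp (ball 0 1))
    (hfmc : ContinuousOn fm {z : ℂ | 1 ≤ ‖z‖})
    (hfmd : MDifferentiableOn 𝓘(ℂ, ℂ) 𝓘(ℂ, E) fm {z : ℂ | 1 < ‖z‖})
    (hgmc : ContinuousOn gm {z : ℂ | 1 ≤ ‖z‖})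
    (hgmd : MDifferentiableOn 𝓘(ℂ, ℂ) 𝓘(ℂ, E) gm {z : ℂ | 1 < ‖z‖})
    (hfml : Tendsto fm (comap (fun z : ℂ => ‖z‖) atTop) (nhds Linf))
    (hgml : Tendsto gm (comap (fun z : ℂ => ‖z‖) atTop) (nhds Linf))
    (heq : ∀ z : ℂ, ‖z‖ = 1 → fp z * fm z = gp z * gm z) :
    Set.EqOn fp gp (closedBall 0 1) ∧ Set.EqOn fm gm {z : ℂ | 1 ≤ ‖z‖} := by
  have : IsTopologicalGroup G := topologicalGroup_of_lieGroup 𝓘(ℂ, E) (⊤ : ℕ∞)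
  have hn : ((⊤ : ℕ∞) : WithTop ℕ∞) ≠ 0 := by simp
  set h : ℂ → G := fun z => (gp z)⁻¹ * fp z
  set k : ℂ → G := fun z => gm z * (fm z)⁻¹
  have hhd : MDifferentiableOn 𝓘(ℂ, ℂ) 𝓘(ℂ, E) h (ball 0 1) :=
    (hgpd.inv_of_lieGroup hn).mul_of_contMDiffMul hn hfpd
  have hkd : MDifferentiableOn 𝓘(ℂ, ℂ) 𝓘(ℂ, E) k {z : ℂ | 1 < ‖z‖} :=
    hgmd.mul_of_contMDiffMul hn (hfmd.inv_of_lieGroup hn)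
  have hk : Tendsto k (comap (fun z : ℂ => ‖z‖) atTop) (𝓝 1) := by
    simpa using hgml.mul hfml.inv
  have hhk : EqOn h k (sphere 0 1) := fun z hz => by
    rw [inv_mul_eq_iff_eq_mul, ← mul_assoc, eq_mul_inv_iff_mul_eq]
    exact heq z (mem_sphere_zero_iff_norm.1 hz)
  have hconst (φ : G → ℂ) (hφ : MDifferentiable 𝓘(ℂ, E) 𝓘(ℂ, ℂ) φ) :
      EqOn (φ ∘ h) (fun _ => φ 1) (closedBall 0 1) ∧
        EqOn (φ ∘ k) (fun _ => φ 1) {z : ℂ | 1 ≤ ‖z‖} :=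
    eqOn_const_of_eqOn_sphere one_pos
      ⟨(hφ.comp_mdifferentiableOn hhd).differentiableOn, closure_ball (0 : ℂ) one_ne_zero ▸
        hφ.continuous.comp_continuousOn (hgpc.inv.mul hfpc)⟩
      (hφ.continuous.comp_continuousOn (hgmc.mul hfmc.inv))
      (hφ.comp_mdifferentiableOn hkd).differentiableOn
      ((hφ.continuous.tendsto 1).comp hk) fun z hz => congrArg φ (hhk hz)
  have heq_one (x : G) (hx : ∀ φ : G → ℂ, MDifferentiable 𝓘(ℂ, E) 𝓘(ℂ, ℂ) φ → φ x = φ 1) :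
      x = 1 := by
    by_contra hne
    obtain ⟨φ, hφ, hφx⟩ := hsep x 1 hne
    exact hφx (hx φ hφ)
  exact ⟨fun z hz => (inv_mul_eq_one.1 (heq_one _ fun φ hφ => (hconst φ hφ).1 hz)).symm,
    fun z hz => (mul_inv_eq_one.1 (heq_one _ fun φ hφ => (hconst φ hφ).2 hz)).symm⟩

/-- Uniqueness of Birkhoff-type decompositions with values in a complex
Banach–Lie group `G` on which holomorphic (complex analytic) functions separate points.
If `f₊ f₋ = g₊ g₋` on the unit circle and `f₋(∞) = g₋(∞)`, then `f₊ = g₊` on the closed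
unit disk and `f₋ = g₋` on `{z : 1 ≤ |z|}`. -/
theorem stmt_1
    {E : Type*} [NormedAddCommGroup E] [NormedSpace ℂ E]
    {G : Type*} [TopologicalSpace G] [T2Space G] [ChartedSpace E G] [Group G]
    [LieGroup 𝓘(ℂ, E) (⊤ : ℕ∞) G]
    (hsep : ∀ x y : G, x ≠ y → ∃ φ : G → ℂ,
      MDifferentiable 𝓘(ℂ, E) 𝓘(ℂ, ℂ) φ ∧ φ x ≠ φ y)
    (fp gp fm gm : ℂ → G) (Linf : G)
    (hfpc : ContinuousOn fp (closedBall 0 1))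
    (hfpd : MDifferentiableOn 𝓘(ℂ, ℂ) 𝓘(ℂ, E) fp (ball 0 1))
    (hgpc : ContinuousOn gp (closedBall 0 1))
    (hgpd : MDifferentiableOn 𝓘(ℂ, ℂ) 𝓘(ℂ, E) gp (ball 0 1))
    (hfmc : ContinuousOn fm {z : ℂ | 1 ≤ ‖z‖})
    (hfmd : MDifferentiableOn 𝓘(ℂ, ℂ) 𝓘(ℂ, E) fm {z : ℂ | 1 < ‖z‖})
    (hgmc : ContinuousOn gm {z : ℂ | 1 ≤ ‖z‖})
    (hgmd : MDifferentiableOn 𝓘(ℂ, ℂ) 𝓘(ℂ, E) gm {z : ℂ | 1 < ‖z‖})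
    (hfml : Tendsto fm (comap (fun z : ℂ => ‖z‖) atTop) (nhds Linf))
    (hgml : Tendsto gm (comap (fun z : ℂ => ‖z‖) atTop) (nhds Linf))
    (heq : ∀ z : ℂ, ‖z‖ = 1 → fp z * fm z = gp z * gm z) :
    Set.EqOn fp gp (closedBall 0 1) ∧ Set.EqOn fm gm {z : ℂ | 1 ≤ ‖z‖} :=
  stmt_1_general hsep fp gp fm gm Linf hfpc hfpd hgpc hgpd hfmc hfmd hgmc hgmd hfml hgml heq
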